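/- Let n ≥ 2 and let a be a non-annihilating endomorphism of I_ω^n(conv). If a fixes the identity partial map on {0}, then a is the identity automorphism of I_ω^n(conv). -/
import Mathlib


/-- A nonzero element of `I_ω^n(conv)`: the partial order isomorphism with domain
`{i, …, i+k-1}` and range `{j, …, j+k-1}` (mapping `t ↦ t - i + j`), where `1 ≤ k ≤ n`. -/
structure ConvEl (n : ℕ) where
  i : ℕ
  j : ℕ
  k : ℕ
  k_pos : 1 ≤ k
  k_le : k ≤ n

/-- The inverse semigroup `I_ω^n(conv)` of partial order isomorphisms between order-convex
subsets of `(ω, ≤)` of cardinality at most `n`; `none` is the zero (the empty map). -/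
abbrev ConvSgp (n : ℕ) := Option (ConvEl n)

/-- Composition of partial maps (`x` applied first, then `y`) in `I_ω^n(conv)`. -/
def cmul {n : ℕ} : ConvSgp n → ConvSgp n → ConvSgp n
  | some x, some y =>
    if h : max x.j y.i < min (x.j + x.k) (y.i + y.k) then
      some { i := max x.j y.i - x.j + x.i
             j := max x.j y.i - y.i + y.j
             k := min (x.j + x.k) (y.i + y.k) - max x.j y.i
             k_pos := by omega
             k_le := by have hx := x.k_le; omega }
    else none
  | _, _ => none

private lemma mk_eq {n : ℕ} {i j k i' j' k' : ℕ} {h1 : 1 ≤ k} {h2 : k ≤ n} {h3 : 1 ≤ k'} {h4 : k' ≤ n}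
    (e1 : i = i') (e2 : j = j') (e3 : k = k') :
    (⟨i, j, k, h1, h2⟩ : ConvEl n) = ⟨i', j', k', h3, h4⟩ := by
  subst e1; subst e2; subst e3; rfl

private lemma smk_eq {n : ℕ} {i j k i' j' k' : ℕ} {h1 : 1 ≤ k} {h2 : k ≤ n} {h3 : 1 ≤ k'} {h4 : k' ≤ n}
    (e1 : i = i') (e2 : j = j') (e3 : k = k') :
    (some ⟨i, j, k, h1, h2⟩ : ConvSgp n) = some ⟨i', j', k', h3, h4⟩ :=
  congrArg some (mk_eq e1 e2 e3)

private lemma mk_inj {n : ℕ} {i j k i' j' k' : ℕ} {h1 : 1 ≤ k} {h2 : k ≤ n} {h3 : 1 ≤ k'} {h4 : k' ≤ n}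
    (h : (⟨i, j, k, h1, h2⟩ : ConvEl n) = ⟨i', j', k', h3, h4⟩) :
    i = i' ∧ j = j' ∧ k = k' :=
  ⟨congrArg ConvEl.i h, congrArg ConvEl.j h, congrArg ConvEl.k h⟩

private lemma cmul_mk_eq {n : ℕ} {i1 j1 k1 i2 j2 k2 i3 j3 k3 : ℕ}
    {a1 : 1 ≤ k1} {a2 : k1 ≤ n} {b1 : 1 ≤ k2} {b2 : k2 ≤ n} {c1 : 1 ≤ k3} {c2 : k3 ≤ n}
    (hc : max j1 i2 < min (j1 + k1) (i2 + k2))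
    (h1 : max j1 i2 - j1 + i1 = i3) (h2 : max j1 i2 - i2 + j2 = j3)
    (h3 : min (j1 + k1) (i2 + k2) - max j1 i2 = k3) :
    cmul (some ⟨i1, j1, k1, a1, a2⟩) (some (⟨i2, j2, k2, b1, b2⟩ : ConvEl n)) = some ⟨i3, j3, k3, c1, c2⟩ := by
  simp only [cmul]
  rw [dif_pos hc]
  exact smk_eq h1 h2 h3

private lemma cmul_mk_eq_none {n : ℕ} {i1 j1 k1 i2 j2 k2 : ℕ}
    {a1 : 1 ≤ k1} {a2 : k1 ≤ n} {b1 : 1 ≤ k2} {b2 : k2 ≤ n}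
    (hc : ¬ max j1 i2 < min (j1 + k1) (i2 + k2)) :
    cmul (some ⟨i1, j1, k1, a1, a2⟩) (some (⟨i2, j2, k2, b1, b2⟩ : ConvEl n)) = none := by
  simp only [cmul]
  rw [dif_neg hc]

private lemma cmul_mk_elim {n : ℕ} {i1 j1 k1 i2 j2 k2 i3 j3 k3 : ℕ}
    {a1 : 1 ≤ k1} {a2 : k1 ≤ n} {b1 : 1 ≤ k2} {b2 : k2 ≤ n} {c1 : 1 ≤ k3} {c2 : k3 ≤ n}
    (h : cmul (some ⟨i1, j1, k1, a1, a2⟩) (some (⟨i2, j2, k2, b1, b2⟩ : ConvEl n)) = some ⟨i3, j3, k3, c1, c2⟩) :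
    max j1 i2 < min (j1 + k1) (i2 + k2) ∧ i3 = max j1 i2 - j1 + i1 ∧
      j3 = max j1 i2 - i2 + j2 ∧ k3 = min (j1 + k1) (i2 + k2) - max j1 i2 := by
  by_cases hc : max j1 i2 < min (j1 + k1) (i2 + k2)
  · rw [cmul_mk_eq (c1 := by omega) (c2 := by have := a2; omega) hc rfl rfl rfl] at h
    obtain ⟨e1, e2, e3⟩ := mk_inj (Option.some.inj h)
    exact ⟨hc, e1.symm, e2.symm, e3.symm⟩
  · rw [cmul_mk_eq_none hc] at h
    exact absurd h (by simp)

private lemma cmul_mk_elim_none {n : ℕ} {i1 j1 k1 i2 j2 k2 : ℕ}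
    {a1 : 1 ≤ k1} {a2 : k1 ≤ n} {b1 : 1 ≤ k2} {b2 : k2 ≤ n}
    (h : cmul (some ⟨i1, j1, k1, a1, a2⟩) (some (⟨i2, j2, k2, b1, b2⟩ : ConvEl n)) = none) :
    ¬ max j1 i2 < min (j1 + k1) (i2 + k2) := by
  intro hc
  rw [cmul_mk_eq (c1 := by omega) (c2 := by have := a2; omega) hc rfl rfl rfl] at h
  exact absurd h (by simp)

private lemma cmul_none_right {n : ℕ} (x : ConvSgp n) : cmul x none = none := by
  cases x <;> rfl

private lemma cmul_none_left {n : ℕ} (x : ConvSgp n) : cmul none x = none := by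
  cases x <;> rfl

private lemma step_lemma {n : ℕ} (hn : 1 ≤ n) {a : ConvSgp n → ConvSgp n}
    (ha : ∀ x y : ConvSgp n, a (cmul x y) = cmul (a x) (a y))
    (ha0 : a none = none)
    (hnz : ∀ y : ConvEl n, a (some y) ≠ none)
    (m p : ℕ) (hm : a (some ⟨m, m, 1, le_refl 1, hn⟩) = some ⟨p, p, 1, le_refl 1, hn⟩) :
    ∃ q, q ≠ p ∧ a (some ⟨m + 1, m + 1, 1, le_refl 1, hn⟩) = some ⟨q, q, 1, le_refl 1, hn⟩ ∧
      a (some ⟨m, m + 1, 1, le_refl 1, hn⟩) = some ⟨p, q, 1, le_refl 1, hn⟩ := by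
  obtain ⟨z, hz⟩ := Option.ne_none_iff_exists'.mp (hnz ⟨m, m + 1, 1, le_refl 1, hn⟩)
  obtain ⟨zi, zj, zk, zk1, zk2⟩ := z
  obtain ⟨w, hw⟩ := Option.ne_none_iff_exists'.mp (hnz ⟨m + 1, m, 1, le_refl 1, hn⟩)
  obtain ⟨wi, wj, wk, wk1, wk2⟩ := w
  -- rel1 : e_m * s = s
  have r1 : cmul (some ⟨m, m, 1, le_refl 1, hn⟩) (some ⟨m, m + 1, 1, le_refl 1, hn⟩)
      = some ⟨m, m + 1, 1, le_refl 1, hn⟩ :=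
    cmul_mk_eq (by omega) (by omega) (by omega) (by omega)
  have h1 := ha (some ⟨m, m, 1, le_refl 1, hn⟩) (some ⟨m, m + 1, 1, le_refl 1, hn⟩)
  rw [r1, hm, hz] at h1
  obtain ⟨c1, e1i, e1j, e1k⟩ := cmul_mk_elim h1.symm
  have hzi : zi = p := by omega
  have hzk : zk = 1 := by omega
  -- rel2 : s⁻¹ * e_m = s⁻¹
  have r2 : cmul (some ⟨m + 1, m, 1, le_refl 1, hn⟩) (some ⟨m, m, 1, le_refl 1, hn⟩)
      = some ⟨m + 1, m, 1, le_refl 1, hn⟩ :=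
    cmul_mk_eq (by omega) (by omega) (by omega) (by omega)
  have h2 := ha (some ⟨m + 1, m, 1, le_refl 1, hn⟩) (some ⟨m, m, 1, le_refl 1, hn⟩)
  rw [r2, hm, hw] at h2
  obtain ⟨c2, e2i, e2j, e2k⟩ := cmul_mk_elim h2.symm
  have hwj : wj = p := by omega
  have hwk : wk = 1 := by omega
  -- rel3 : s * s⁻¹ = e_m
  have r3 : cmul (some ⟨m, m + 1, 1, le_refl 1, hn⟩) (some ⟨m + 1, m, 1, le_refl 1, hn⟩)
      = some ⟨m, m, 1, le_refl 1, hn⟩ :=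
    cmul_mk_eq (by omega) (by omega) (by omega) (by omega)
  have h3 := ha (some ⟨m, m + 1, 1, le_refl 1, hn⟩) (some ⟨m + 1, m, 1, le_refl 1, hn⟩)
  rw [r3, hm, hz, hw] at h3
  obtain ⟨c3, e3i, e3j, e3k⟩ := cmul_mk_elim h3.symm
  have hwi : wi = zj := by omega
  -- rel4 : s⁻¹ * s = e_{m+1}
  have r4 : cmul (some ⟨m + 1, m, 1, le_refl 1, hn⟩) (some ⟨m, m + 1, 1, le_refl 1, hn⟩)
      = some ⟨m + 1, m + 1, 1, le_refl 1, hn⟩ :=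
    cmul_mk_eq (by omega) (by omega) (by omega) (by omega)
  have h4 := ha (some ⟨m + 1, m, 1, le_refl 1, hn⟩) (some ⟨m, m + 1, 1, le_refl 1, hn⟩)
  rw [r4, hw, hz] at h4
  have h4' : a (some ⟨m + 1, m + 1, 1, le_refl 1, hn⟩) = some ⟨zj, zj, 1, le_refl 1, hn⟩ :=
    h4.trans (cmul_mk_eq (by omega) (by omega) (by omega) (by omega))
  -- s * s = 0
  have r5 : cmul (some ⟨m, m + 1, 1, le_refl 1, hn⟩) (some ⟨m, m + 1, 1, le_refl 1, hn⟩)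
      = (none : ConvSgp n) := cmul_mk_eq_none (by omega)
  have h5 := ha (some ⟨m, m + 1, 1, le_refl 1, hn⟩) (some ⟨m, m + 1, 1, le_refl 1, hn⟩)
  rw [r5, ha0, hz] at h5
  have hne := cmul_mk_elim_none h5.symm
  exact ⟨zj, by omega, h4', hz.trans (smk_eq (by omega) rfl (by omega))⟩

/-- For `n ≥ 2`, every non-annihilating endomorphism of `I_ω^n(conv)` which fixes the
identity partial map on `{0}` is the identity automorphism. -/
theorem convSgp_nonannihilating_fixing_is_identity (n : ℕ) (hn : 2 ≤ n)
    (a : ConvSgp n → ConvSgp n)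
    (ha : ∀ x y : ConvSgp n, a (cmul x y) = cmul (a x) (a y))
    (hna : ¬ ∃ c : ConvSgp n, ∀ x : ConvSgp n, a x = c)
    (hfix : a (some ⟨0, 0, 1, le_refl 1, le_trans one_le_two hn⟩) =
      some ⟨0, 0, 1, le_refl 1, le_trans one_le_two hn⟩) :
    a = id := by
  have hn1 : 1 ≤ n := by omega
  have hfix' : a (some ⟨0, 0, 1, le_refl 1, hn1⟩) = some ⟨0, 0, 1, le_refl 1, hn1⟩ := hfix
  -- Part A : a none = none
  have ha0 : a none = none := by
    rcases hA : a none with _ | z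
    · rfl
    exfalso
    obtain ⟨zi, zj, zk, zk1, zk2⟩ := z
    have h1 : a none = cmul (a none) (a none) := ha none none
    have h2 : a none = cmul (a (some ⟨0, 0, 1, le_refl 1, hn1⟩)) (a none) :=
      ha (some ⟨0, 0, 1, le_refl 1, hn1⟩) none
    rw [hA, hfix'] at h2
    obtain ⟨c1, e1, e2, e3⟩ := cmul_mk_elim h2.symm
    have hzi : zi = 0 := by omega
    have hzk : zk = 1 := by omega
    rw [hA] at h1
    obtain ⟨c2, f1, f2, f3⟩ := cmul_mk_elim h1.symm
    have hzj : zj = 0 := by omega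
    -- now a none = e0 ; show a is constant e0, contradiction
    refine hna ⟨some ⟨0, 0, 1, le_refl 1, hn1⟩, ?_⟩
    intro x
    rcases x with _ | y
    · exact hA.trans (smk_eq hzi hzj hzk)
    obtain ⟨i, j, k, hk1, hk2⟩ := y
    have hA' : a none = some ⟨0, 0, 1, le_refl 1, hn1⟩ := hA.trans (smk_eq hzi hzj hzk)
    have hsq : ∀ i' j' : ℕ, i' + k ≤ j' ∨ j' + k ≤ i' →
        a (some ⟨i', j', k, hk1, hk2⟩) = some ⟨0, 0, 1, le_refl 1, hn1⟩ := by
      intro i' j' hij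
      have ru : cmul (some ⟨i', j', k, hk1, hk2⟩) (some ⟨i', j', k, hk1, hk2⟩)
          = (none : ConvSgp n) := cmul_mk_eq_none (by omega)
      have hu := ha (some ⟨i', j', k, hk1, hk2⟩) (some ⟨i', j', k, hk1, hk2⟩)
      rw [ru, hA'] at hu
      rcases hB : a (some ⟨i', j', k, hk1, hk2⟩) with _ | w
      · rw [hB, cmul_none_left] at hu
        exact absurd hu (by simp)
      obtain ⟨wi, wj, wk, wk1, wk2⟩ := w
      rw [hB] at hu
      obtain ⟨c, g1, g2, g3⟩ := cmul_mk_elim hu.symm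
      exact smk_eq (by omega) (by omega) (by omega)
    have hue := hsq i (max i j + k) (by omega)
    have hve := hsq (max i j + k) j (by omega)
    have rp : cmul (some ⟨i, max i j + k, k, hk1, hk2⟩) (some ⟨max i j + k, j, k, hk1, hk2⟩)
        = some ⟨i, j, k, hk1, hk2⟩ := cmul_mk_eq (by omega) (by omega) (by omega) (by omega)
    have hxy := ha (some ⟨i, max i j + k, k, hk1, hk2⟩) (some ⟨max i j + k, j, k, hk1, hk2⟩)
    rw [rp, hue, hve] at hxy
    exact hxy.trans (cmul_mk_eq (by omega) (by omega) (by omega) (by omega))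
  -- Part B : nonzero elements stay nonzero
  have hnz : ∀ y : ConvEl n, a (some y) ≠ none := by
    intro y hy
    obtain ⟨i, j, k, hk1, hk2⟩ := y
    have r1 : cmul (some ⟨0, i, 1, le_refl 1, hn1⟩) (some ⟨i, j, k, hk1, hk2⟩)
        = some ⟨0, j, 1, le_refl 1, hn1⟩ := cmul_mk_eq (by omega) (by omega) (by omega) (by omega)
    have r2 : cmul (some ⟨0, j, 1, le_refl 1, hn1⟩) (some ⟨j, 0, 1, le_refl 1, hn1⟩)
        = some ⟨0, 0, 1, le_refl 1, hn1⟩ := cmul_mk_eq (by omega) (by omega) (by omega) (by omega)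
    have h2 := ha (some ⟨0, i, 1, le_refl 1, hn1⟩) (some ⟨i, j, k, hk1, hk2⟩)
    rw [r1, hy, cmul_none_right] at h2
    have h3 := ha (some ⟨0, j, 1, le_refl 1, hn1⟩) (some ⟨j, 0, 1, le_refl 1, hn1⟩)
    rw [r2, h2, cmul_none_left, hfix'] at h3
    exact absurd h3 (by simp)
  -- Part C : images of the unit idempotents
  have exq : ∀ m, ∃ q, a (some ⟨m, m, 1, le_refl 1, hn1⟩) = some ⟨q, q, 1, le_refl 1, hn1⟩ := by
    intro m
    induction m with
    | zero => exact ⟨0, hfix'⟩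
    | succ m ih =>
      obtain ⟨p, hp⟩ := ih
      obtain ⟨q, _, hq, _⟩ := step_lemma hn1 ha ha0 hnz m p hp
      exact ⟨q, hq⟩
  choose p hp using exq
  have hp0 : p 0 = 0 := (mk_inj (Option.some.inj ((hp 0).symm.trans hfix'))).1
  have hstep : ∀ m, p (m + 1) ≠ p m ∧
      a (some ⟨m, m + 1, 1, le_refl 1, hn1⟩) = some ⟨p m, p (m + 1), 1, le_refl 1, hn1⟩ := by
    intro m
    obtain ⟨q, hqp, hq, hs⟩ := step_lemma hn1 ha ha0 hnz m (p m) (hp m)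
    have hqq : q = p (m + 1) := (mk_inj (Option.some.inj (hq.symm.trans (hp (m + 1))))).1
    rw [hqq] at hqp hs
    exact ⟨hqp, hs⟩
  -- Part D : second difference vanishes
  have hrec : ∀ m, p m + p (m + 2) = 2 * p (m + 1) := by
    intro m
    obtain ⟨z, hz⟩ := Option.ne_none_iff_exists'.mp (hnz ⟨m, m + 1, 2, one_le_two, hn⟩)
    obtain ⟨A, B, K, K1, K2⟩ := z
    have r1 : cmul (some ⟨m, m, 1, le_refl 1, hn1⟩) (some ⟨m, m + 1, 2, one_le_two, hn⟩)
        = some ⟨m, m + 1, 1, le_refl 1, hn1⟩ := cmul_mk_eq (by omega) (by omega) (by omega) (by omega)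
    have h1 := ha (some ⟨m, m, 1, le_refl 1, hn1⟩) (some ⟨m, m + 1, 2, one_le_two, hn⟩)
    rw [r1, hp m, hz, (hstep m).2] at h1
    obtain ⟨c1, e1, e2, e3⟩ := cmul_mk_elim h1.symm
    have r2 : cmul (some ⟨m + 1, m + 1, 1, le_refl 1, hn1⟩) (some ⟨m, m + 1, 2, one_le_two, hn⟩)
        = some ⟨m + 1, m + 1 + 1, 1, le_refl 1, hn1⟩ := cmul_mk_eq (by omega) (by omega) (by omega) (by omega)
    have h2 := ha (some ⟨m + 1, m + 1, 1, le_refl 1, hn1⟩) (some ⟨m, m + 1, 2, one_le_two, hn⟩)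
    rw [r2, hp (m + 1), hz, (hstep (m + 1)).2] at h2
    obtain ⟨c2, f1, f2, f3⟩ := cmul_mk_elim h2.symm
    have hcast : p (m + 1 + 1) = p (m + 2) := congrArg p (by omega)
    omega
  -- Part E : window bound
  have hwin : ∀ m, m < n → p m < n := by
    obtain ⟨g, hg⟩ := Option.ne_none_iff_exists'.mp (hnz ⟨0, 0, n, hn1, le_refl n⟩)
    obtain ⟨gi, gj, gk, gk1, gk2⟩ := g
    have key : ∀ m, m < n → gi ≤ p m ∧ p m < gi + gk := by
      intro m hm
      have r1 : cmul (some ⟨m, m, 1, le_refl 1, hn1⟩) (some ⟨0, 0, n, hn1, le_refl n⟩)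
          = some ⟨m, m, 1, le_refl 1, hn1⟩ := cmul_mk_eq (by omega) (by omega) (by omega) (by omega)
      have h1 := ha (some ⟨m, m, 1, le_refl 1, hn1⟩) (some ⟨0, 0, n, hn1, le_refl n⟩)
      rw [r1, hp m, hg] at h1
      obtain ⟨c, ei, ej, ek⟩ := cmul_mk_elim h1.symm
      omega
    intro m hm
    have k0 := key 0 (by omega)
    have km := key m hm
    omega
  -- arithmetic : p m = m
  have hd : ∀ m, p (m + 1) = p m + p 1 := by
    intro m
    induction m with
    | zero =>
      have : p (0 + 1) = p 1 := congrArg p rfl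
      omega
    | succ m ih =>
      have h := hrec m
      have hc : p (m + 1 + 1) = p (m + 2) := congrArg p (by omega)
      omega
  have hlin : ∀ m, p m = m * p 1 := by
    intro m
    induction m with
    | zero => simpa using hp0
    | succ m ih => rw [hd m, ih]; ring
  have hd1 : p 1 = 1 := by
    have h1 : p (0 + 1) ≠ p 0 := (hstep 0).1
    have h1' : p (0 + 1) = p 1 := congrArg p rfl
    have h2 : p (n - 1) < n := hwin (n - 1) (by omega)
    rw [hlin (n - 1)] at h2
    by_contra hne
    have hge : 2 ≤ p 1 := by omega
    have := Nat.mul_le_mul_left (n - 1) hge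
    omega
  have hpm : ∀ m, p m = m := by
    intro m
    rw [hlin m, hd1, mul_one]
  have he : ∀ m, a (some ⟨m, m, 1, le_refl 1, hn1⟩) = some ⟨m, m, 1, le_refl 1, hn1⟩ := by
    intro m
    have h := hp m
    rw [hpm m] at h
    exact h
  -- Part F : all rank-one elements are fixed
  have hr1 : ∀ i j : ℕ, a (some ⟨i, j, 1, le_refl 1, hn1⟩) = some ⟨i, j, 1, le_refl 1, hn1⟩ := by
    intro i j
    obtain ⟨z, hz⟩ := Option.ne_none_iff_exists'.mp (hnz ⟨i, j, 1, le_refl 1, hn1⟩)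
    obtain ⟨zi, zj, zk, zk1, zk2⟩ := z
    have r1 : cmul (some ⟨i, i, 1, le_refl 1, hn1⟩) (some ⟨i, j, 1, le_refl 1, hn1⟩)
        = some ⟨i, j, 1, le_refl 1, hn1⟩ := cmul_mk_eq (by omega) (by omega) (by omega) (by omega)
    have h1 := ha (some ⟨i, i, 1, le_refl 1, hn1⟩) (some ⟨i, j, 1, le_refl 1, hn1⟩)
    rw [r1, he i, hz] at h1
    obtain ⟨c1, e1, e2, e3⟩ := cmul_mk_elim h1.symm
    have r2 : cmul (some ⟨i, j, 1, le_refl 1, hn1⟩) (some ⟨j, j, 1, le_refl 1, hn1⟩)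
        = some ⟨i, j, 1, le_refl 1, hn1⟩ := cmul_mk_eq (by omega) (by omega) (by omega) (by omega)
    have h2 := ha (some ⟨i, j, 1, le_refl 1, hn1⟩) (some ⟨j, j, 1, le_refl 1, hn1⟩)
    rw [r2, he j, hz] at h2
    obtain ⟨c2, f1, f2, f3⟩ := cmul_mk_elim h2.symm
    rw [hz]
    exact smk_eq (by omega) (by omega) (by omega)
  -- Part G : every element is fixed
  funext x
  rcases x with _ | y
  · exact ha0
  obtain ⟨i, j, k, hk1, hk2⟩ := y
  show a (some ⟨i, j, k, hk1, hk2⟩) = some ⟨i, j, k, hk1, hk2⟩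
  obtain ⟨z, hz⟩ := Option.ne_none_iff_exists'.mp (hnz ⟨i, j, k, hk1, hk2⟩)
  obtain ⟨zi, zj, zk, zk1, zk2⟩ := z
  have key : ∀ t, t < k → zi ≤ i + t ∧ i + t < zi + zk ∧ j + t + zi = i + t + zj := by
    intro t ht
    have r : cmul (some ⟨i + t, i + t, 1, le_refl 1, hn1⟩) (some ⟨i, j, k, hk1, hk2⟩)
        = some ⟨i + t, j + t, 1, le_refl 1, hn1⟩ := cmul_mk_eq (by omega) (by omega) (by omega) (by omega)
    have h := ha (some ⟨i + t, i + t, 1, le_refl 1, hn1⟩) (some ⟨i, j, k, hk1, hk2⟩)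
    rw [r, he (i + t), hz, hr1 (i + t) (j + t)] at h
    obtain ⟨c, e1, e2, e3⟩ := cmul_mk_elim h.symm
    exact ⟨by omega, by omega, by omega⟩
  have k0 := key 0 (by omega)
  have kk := key (k - 1) (by omega)
  have rout : cmul (some ⟨i + k, i + k, 1, le_refl 1, hn1⟩) (some ⟨i, j, k, hk1, hk2⟩)
      = (none : ConvSgp n) := cmul_mk_eq_none (by omega)
  have hout := ha (some ⟨i + k, i + k, 1, le_refl 1, hn1⟩) (some ⟨i, j, k, hk1, hk2⟩)
  rw [rout, ha0, he (i + k), hz] at hout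
  have nout := cmul_mk_elim_none hout.symm
  have hzi_ge : i ≤ zi := by
    rcases Nat.eq_zero_or_pos i with h0 | h0
    · omega
    have rlow : cmul (some ⟨i - 1, i - 1, 1, le_refl 1, hn1⟩) (some ⟨i, j, k, hk1, hk2⟩)
        = (none : ConvSgp n) := cmul_mk_eq_none (by omega)
    have hlow := ha (some ⟨i - 1, i - 1, 1, le_refl 1, hn1⟩) (some ⟨i, j, k, hk1, hk2⟩)
    rw [rlow, ha0, he (i - 1), hz] at hlow
    have nlow := cmul_mk_elim_none hlow.symm
    omega
  rw [hz]
  exact smk_eq (by omega) (by omega) (by omega)
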